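/- arXiv:1703.08306 — 2 statements merged into one kernel-verified Lean document; each statement's English description precedes it below -/
import Mathlib

section
/- Let n, k ≥ 1 and let f₁, …, f_{k+1} : (Fin n → ZMod 2) → (Fin k → (Fin n → ZMod 2)) be arbitrary round functions. Let x_p and x_q be two initial states of the n:kn-UFN that agree in all blocks except the first block L₁⁰. Then (a) the last blocks agree after each of the first k−1 rounds: R_p^i = R_q^i for all 0 ≤ i ≤ k−1, and (b) the first blocks of the states after k+1 rounds satisfy L_{p,1}^{k+1} ⊕ L_{q,1}^{k+1} = L_{p,1}⁰ ⊕ L_{q,1}⁰. -/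
/-- An `n`-bit block, i.e. a bit string of length `n`. -/
abbrev Blk (n : ℕ) : Type := Fin n → ZMod 2

/-- The state of a `(k+1)`-block Feistel network: `k+1` blocks of `n` bits each. -/
abbrev St (n k : ℕ) : Type := Fin (k + 1) → Blk n

/-- A round function of a target-heavy `n:kn`-UFN: input `n` bits, output `kn` bits,
with `f R j` the `(j+1)`-st `n`-bit component `C_{j+1}(f(R))` of the output. -/
abbrev TgtRF (n k : ℕ) : Type := Blk n → (Fin k → Blk n)

/-- One round of the `n:kn`-UFN:
`(L₁, …, L_k, R) ↦ (R, L₁ ⊕ C₁(f R), …, L_k ⊕ C_k(f R))`.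
State coordinates `0, …, k-1` are `L₁, …, L_k` and coordinate `k` is `R`. -/
def tufnRound {n k : ℕ} (f : TgtRF n k) (s : St n k) : St n k :=
  fun i =>
    if h : (i : ℕ) = 0 then s (Fin.last k)
    else s ⟨(i : ℕ) - 1, by have := i.isLt; omega⟩ +
      f (s (Fin.last k)) ⟨(i : ℕ) - 1, by have := i.isLt; omega⟩

/-- The `r`-round `n:kn`-UFN with round functions `f 0, …, f (r-1)`, applied with `f 0` first. -/
def tufnRun {n k : ℕ} : (r : ℕ) → (Fin r → TgtRF n k) → St n k → St n k
  | 0, _, s => s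
  | r + 1, f, s => tufnRound (f (Fin.last r)) (tufnRun r (fun i => f i.castSucc) s)

/-!
Over `ZMod 2` the XOR difference of the two runs is `Pi.single j δ` with `δ = L_{p,1}⁰ ⊕ L_{q,1}⁰`.
As long as `j` is not the `R`-position, both runs feed the same `R` to the round function, whose
contribution cancels, so a round only shifts the difference from position `j` to `j + 1`.
After `k` rounds the difference `δ` sits in `R`, which round `k + 1` copies to `L₁`.
-/

theorem Blk.add_eq_zero_iff {n : ℕ} {a b : Blk n} : a + b = 0 ↔ a = b := by
  simp only [funext_iff, Pi.add_apply, Pi.zero_apply, CharTwo.add_eq_zero]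

section

variable {n k : ℕ}

theorem tufnRound_zero (f : TgtRF n k) (s : St n k) : tufnRound f s 0 = s (Fin.last k) := rfl

theorem tufnRound_succ (f : TgtRF n k) (s : St n k) (j : Fin k) :
    tufnRound f s j.succ = s j.castSucc + f (s (Fin.last k)) j := rfl

theorem tufnRound_add_tufnRound_of_add_eq_single {sp sq : St n k} {δ : Blk n} (f : TgtRF n k)
    (j : Fin k) (h : sp + sq = Pi.single j.castSucc δ) :
    tufnRound f sp + tufnRound f sq = Pi.single j.succ δ := by
  have hlast : sp (Fin.last k) = sq (Fin.last k) := by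
    rw [← Blk.add_eq_zero_iff, ← Pi.add_apply, h, Pi.single_eq_of_ne (Fin.castSucc_lt_last j).ne']
  ext1 i
  cases i using Fin.cases with
  | zero =>
    rw [Pi.add_apply, tufnRound_zero, tufnRound_zero, hlast, Blk.add_eq_zero_iff.2 rfl,
      Pi.single_eq_of_ne (Fin.succ_ne_zero j).symm]
  | succ m =>
    rw [Pi.add_apply, tufnRound_succ, tufnRound_succ, hlast, add_add_add_comm,
      Blk.add_eq_zero_iff.2 rfl, add_zero, ← Pi.add_apply, h]
    simp only [Pi.single_apply, Fin.succ_inj, Fin.castSucc_inj]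

theorem tufnRun_add_tufnRun_of_add_eq_single {xp xq : St n k} {δ : Blk n}
    (h : xp + xq = Pi.single 0 δ) (i : ℕ) (hi : i ≤ k) (g : Fin i → TgtRF n k) :
    tufnRun i g xp + tufnRun i g xq = Pi.single ⟨i, by omega⟩ δ := by
  induction i with
  | zero => exact h
  | succ i ih =>
    exact tufnRound_add_tufnRound_of_add_eq_single _ ⟨i, hi⟩ (ih (by omega) _)

end

/-- If two initial states of the `n:kn`-UFN agree in all blocks except the
first block `L₁⁰`, then (a) their last blocks agree after each of the first `k-1` rounds:
`R_p^i = R_q^i` for all `0 ≤ i ≤ k-1`; and (b) the first blocks of the states after `k+1`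
rounds satisfy `L_{p,1}^{k+1} ⊕ L_{q,1}^{k+1} = L_{p,1}⁰ ⊕ L_{q,1}⁰`. -/
theorem tufn_k_add_one_rounds_linear_relation (n k : ℕ) (hk : 1 ≤ k)
    (f : Fin (k + 1) → TgtRF n k) (xp xq : St n k)
    (hR : ∀ j : Fin (k + 1), j ≠ 0 → xp j = xq j) :
    (∀ i : ℕ, (hik : i ≤ k - 1) →
      tufnRun i (fun t => f (Fin.castLE (by omega) t)) xp (Fin.last k) =
      tufnRun i (fun t => f (Fin.castLE (by omega) t)) xq (Fin.last k)) ∧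
    tufnRun (k + 1) f xp 0 + tufnRun (k + 1) f xq 0 = xp 0 + xq 0 := by
  have hdiff : xp + xq = Pi.single 0 (xp 0 + xq 0) := by
    ext1 j
    rcases eq_or_ne j 0 with rfl | hj
    · simp
    · rw [Pi.single_eq_of_ne hj, Pi.add_apply, Blk.add_eq_zero_iff.2 (hR j hj)]
  refine ⟨fun i hik => ?_, ?_⟩
  · rw [← Blk.add_eq_zero_iff, ← Pi.add_apply,
      tufnRun_add_tufnRun_of_add_eq_single hdiff i (by omega),
      Pi.single_eq_of_ne (Fin.ne_of_val_ne (by simp only [Fin.val_last]; omega))]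
  · exact (congrFun (tufnRun_add_tufnRun_of_add_eq_single hdiff k le_rfl _) (Fin.last k)).trans
      (Pi.single_eq_same _ _)
end

section
/- Let n, k ≥ 1, let S = (Fin (k+1)) → (Fin n → ZMod 2), and fix any x ∈ S. For a uniformly random permutation π of S, the probability that the XOR of all k+1 blocks of π(x) equals the XOR of all k+1 blocks of x is exactly 1/2^n. Equivalently, the number of permutations π of S with ⊕_{i} (π(x))_i = ⊕_i x_i, multiplied by 2^n, equals the total number of permutations of S. -/
/-!
The image `π x` of a fixed state `x` under a uniformly random permutation is uniformly distributed:
left multiplication by the transposition `swap x y` matches the permutations sending `x` to `y`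
with those fixing `x`. So the probability is the proportion of states whose block-XOR equals a
given block, and that is `1 / 2^n` because the first block of such a state is determined by the
other `k` blocks.
-/

open Finset Fintype Equiv

section PermApply

variable {S : Type*} [Fintype S] [DecidableEq S]

theorem card_filter_perm_apply_eq (x y : S) :
    #{π : Perm S | π x = y} = #{π : Perm S | π x = x} :=
  card_nbij' (swap x y * ·) (swap x y * ·)
    (fun π hπ => by simp_all [Perm.mul_apply])
    (fun π hπ => by simp_all [Perm.mul_apply])
    (fun π _ => swap_mul_self_mul x y π) (fun π _ => swap_mul_self_mul x y π)

theorem card_filter_perm_apply_eq_mul_card (x y : S) :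
    #{π : Perm S | π x = y} * card S = card (Perm S) :=
  calc #{π : Perm S | π x = y} * card S = ∑ z : S, #{π : Perm S | π x = z} := by
        simp [card_filter_perm_apply_eq x, mul_comm]
    _ = card (Perm S) :=
        (card_eq_sum_card_fiberwise (f := fun π : Perm S => π x) fun _ _ => mem_univ _).symm

theorem card_filter_perm_apply_mul_card (x : S) (p : S → Prop) [DecidablePred p] :
    #{π : Perm S | p (π x)} * card S = #{y | p y} * card (Perm S) :=
  calc #{π : Perm S | p (π x)} * card S
      = (∑ y ∈ {y | p y}, #{π : Perm S | π x = y}) * card S := by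
        rw [card_eq_sum_card_fiberwise (f := fun π : Perm S => π x) (t := {y | p y})
          fun π hπ => by simpa using hπ]
        congr 1
        refine sum_congr rfl fun y hy => congr_arg card ?_
        ext π
        simp_all
    _ = #{y | p y} * card (Perm S) := by
        simp [sum_mul, card_filter_perm_apply_eq_mul_card]

end PermApply

theorem card_filter_sum_eq_mul_card {G : Type*} [AddCommGroup G] [Fintype G] [DecidableEq G]
    (k : ℕ) (c : G) :
    #{y : Fin (k + 1) → G | ∑ i, y i = c} * card G = card (Fin (k + 1) → G) := by
  have : #{y : Fin (k + 1) → G | ∑ i, y i = c} = #(univ : Finset (Fin k → G)) :=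
    card_nbij' Fin.tail (fun g => Fin.cons (c - ∑ i, g i) g) (fun _ _ => mem_univ _)
      (fun g _ => by simp [Fin.sum_cons])
      (fun y hy => by
        simp only [coe_filter, mem_univ, true_and, Set.mem_ofPred_eq] at hy
        rw [← hy, Fin.sum_univ_succ]
        simp [Fin.tail])
      (fun g _ => Fin.tail_cons _ _)
  rw [this, card_univ, card_fun, card_fun, Fintype.card_fin, Fintype.card_fin, pow_succ]

theorem card_blk (n : ℕ) : card (Blk n) = 2 ^ n := by
  simp [ZMod.card]

theorem random_perm_block_xor_relation_general (n k : ℕ) (x : St n k) :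
    (((Finset.univ.filter (fun π : Equiv.Perm (St n k) =>
          ∑ i : Fin (k + 1), π x i = ∑ i : Fin (k + 1), x i)).card : ℝ) /
        (Fintype.card (Equiv.Perm (St n k)) : ℝ) = 1 / (2 : ℝ) ^ n) ∧
    (Finset.univ.filter (fun π : Equiv.Perm (St n k) =>
        ∑ i : Fin (k + 1), π x i = ∑ i : Fin (k + 1), x i)).card * 2 ^ n =
      Fintype.card (Equiv.Perm (St n k)) := by
  set c := ∑ i, x i
  have hcount : #{π : Perm (St n k) | ∑ i, π x i = c} * 2 ^ n = card (Perm (St n k)) := by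
    have hfib := card_filter_perm_apply_mul_card x (fun y : St n k => ∑ i, y i = c)
    have hsum := card_filter_sum_eq_mul_card k c
    rw [card_blk] at hsum
    apply Nat.eq_of_mul_eq_mul_right (card_pos (α := St n k))
    calc _ = #{π : Perm (St n k) | ∑ i, π x i = c} * card (St n k) * 2 ^ n := by ring
      _ = #{y : St n k | ∑ i, y i = c} * 2 ^ n * card (Perm (St n k)) := by rw [hfib]; ring
      _ = _ := by rw [hsum, mul_comm]
  refine ⟨?_, hcount⟩
  rw [div_eq_div_iff (by positivity) (by positivity), one_mul]
  exact_mod_cast hcount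

/-- Fix a state `x`.  For a uniformly random permutation `π` of the state
space, the probability that the XOR of all `k+1` blocks of `π x` equals the XOR of all `k+1`
blocks of `x` is exactly `1/2^n`; equivalently, the number of permutations `π` with
`⊕ᵢ (π x) i = ⊕ᵢ x i`, multiplied by `2^n`, equals the total number of permutations. -/
theorem random_perm_block_xor_relation (n k : ℕ) (hn : 1 ≤ n) (hk : 1 ≤ k) (x : St n k) :
    (((Finset.univ.filter (fun π : Equiv.Perm (St n k) =>
          ∑ i : Fin (k + 1), π x i = ∑ i : Fin (k + 1), x i)).card : ℝ) /
        (Fintype.card (Equiv.Perm (St n k)) : ℝ) = 1 / (2 : ℝ) ^ n) ∧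
    (Finset.univ.filter (fun π : Equiv.Perm (St n k) =>
        ∑ i : Fin (k + 1), π x i = ∑ i : Fin (k + 1), x i)).card * 2 ^ n =
      Fintype.card (Equiv.Perm (St n k)) :=
  random_perm_block_xor_relation_general n k x
end
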